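/- Let n ≥ 2 and let A be a real symmetric n×n matrix with trace(A) = 0. Then |trace(A³)| ≤ ((n-2)/√(n(n-1))) · ‖A‖³, where ‖A‖ = √(trace(A²)) denotes the Frobenius norm of A. In particular, for n = 2 every trace-free real symmetric 2×2 matrix A satisfies trace(A³) = 0. -/

import Mathlib

/-!
Diagonalise `A`: its eigenvalues `λᵢ` satisfy `∑ λᵢ = 0`, `∑ λᵢ² = ‖A‖²` and `∑ λᵢ³ = trace(A³)`.
Cauchy–Schwarz on the other `n - 1` eigenvalues gives `λᵢ ≤ (n - 1) t` with `t = ‖A‖ / √(n(n-1))`,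
so `(λᵢ - (n - 1) t)(λᵢ + t)² ≤ 0` for every `i`; summing and using the two moment identities
yields `∑ λᵢ³ ≤ (n - 2) t ‖A‖²`. Applying this to `-A` as well bounds `|trace(A³)|`.
-/

open Finset

section SumEqZero

variable {ι : Type*} [Fintype ι] {l : ι → ℝ}

theorem card_mul_sq_le_of_sum_eq_zero (h0 : ∑ i, l i = 0) (i : ι) :
    (Fintype.card ι : ℝ) * l i ^ 2 ≤ (Fintype.card ι - 1) * ∑ j, l j ^ 2 := by
  classical
  have hCS := sq_sum_le_card_mul_sum_sq (s := univ.erase i) (f := l)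
  have hrest : ∑ j ∈ univ.erase i, l j = -l i := by
    linarith [add_sum_erase univ l (mem_univ i)]
  have hrest_sq := add_sum_erase univ (fun j ↦ l j ^ 2) (mem_univ i)
  rw [hrest, cast_card_erase_of_mem (mem_univ i), card_univ] at hCS
  nlinarith

theorem sum_cube_le_of_sum_eq_zero (hn : 2 ≤ Fintype.card ι) (h0 : ∑ i, l i = 0) :
    ∑ i, l i ^ 3 ≤ ((Fintype.card ι - 2) / √(Fintype.card ι * (Fintype.card ι - 1))) *
      √(∑ i, l i ^ 2) ^ 3 := by
  set n : ℝ := (Fintype.card ι : ℝ)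
  set s := ∑ i, l i ^ 2
  have hn1 : 1 < n := by unfold n; exact_mod_cast hn
  have hs : 0 ≤ s := sum_nonneg fun i _ ↦ sq_nonneg (l i)
  have hnn : 0 < n * (n - 1) := by nlinarith
  set t := √s / √(n * (n - 1))
  have ht : 0 ≤ t := by positivity
  have ht2 : n * (n - 1) * t ^ 2 = s := by
    rw [div_pow, Real.sq_sqrt hs, Real.sq_sqrt hnn.le, mul_div_cancel₀ s hnn.ne']
  have hle : ∀ i, l i ≤ (n - 1) * t := fun i ↦ by
    refine (abs_le_of_sq_le_sq ?_ (mul_nonneg (by linarith) ht)).trans' (le_abs_self _)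
    nlinarith [card_mul_sq_le_of_sum_eq_zero h0 i]
  have hcubic : ∑ i, (l i - (n - 1) * t) * (l i + t) ^ 2 ≤ 0 :=
    sum_nonpos fun i _ ↦ mul_nonpos_of_nonpos_of_nonneg (by linarith [hle i]) (sq_nonneg _)
  have hexpand : ∑ i, (l i - (n - 1) * t) * (l i + t) ^ 2 =
      ∑ i, l i ^ 3 + (3 - n) * t * s + (t ^ 2 - 2 * (n - 1) * t ^ 2) * ∑ i, l i
        - t * (n * (n - 1) * t ^ 2) := by
    rw [sum_congr rfl fun i _ ↦ show (l i - (n - 1) * t) * (l i + t) ^ 2 =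
      l i ^ 3 + (3 - n) * t * l i ^ 2 + (t ^ 2 - 2 * (n - 1) * t ^ 2) * l i
        - (n - 1) * t ^ 3 by ring]
    simp only [sum_sub_distrib, sum_add_distrib, ← mul_sum, sum_const, card_univ, nsmul_eq_mul]
    ring
  rw [hexpand, h0, ht2] at hcubic
  calc ∑ i, l i ^ 3 ≤ (n - 2) * t * s := by linarith
    _ = (n - 2) / √(n * (n - 1)) * √s ^ 3 := by
      rw [pow_succ, Real.sq_sqrt hs]; ring

theorem abs_sum_cube_le_of_sum_eq_zero (hn : 2 ≤ Fintype.card ι) (h0 : ∑ i, l i = 0) :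
    |∑ i, l i ^ 3| ≤ ((Fintype.card ι - 2) / √(Fintype.card ι * (Fintype.card ι - 1))) *
      √(∑ i, l i ^ 2) ^ 3 := by
  have hneg := sum_cube_le_of_sum_eq_zero (l := -l) hn (by simp [h0])
  simp only [Pi.neg_apply, neg_sq, Odd.neg_pow (by decide : Odd 3), sum_neg_distrib] at hneg
  exact abs_le.2 ⟨by linarith, sum_cube_le_of_sum_eq_zero hn h0⟩

end SumEqZero

namespace Matrix.IsHermitian

variable {𝕜 n : Type*} [RCLike 𝕜] [Fintype n] [DecidableEq n] {A : Matrix n n 𝕜}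

theorem trace_pow_eq_sum_eigenvalues_pow (hA : A.IsHermitian) (k : ℕ) :
    (A ^ k).trace = ∑ i, (hA.eigenvalues i : 𝕜) ^ k := by
  conv_lhs => rw [hA.spectral_theorem]
  rw [← map_pow, Unitary.conjStarAlgAut_apply, trace_mul_cycle, Unitary.coe_star_mul_self,
    one_mul, diagonal_pow, trace_diagonal]
  rfl

theorem abs_trace_pow_three_le {A : Matrix n n ℝ} (hA : A.IsHermitian) (hn : 2 ≤ Fintype.card n)
    (h0 : A.trace = 0) :
    |(A ^ 3).trace| ≤ ((Fintype.card n - 2) / √(Fintype.card n * (Fintype.card n - 1))) *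
      √((A ^ 2).trace) ^ 3 := by
  rw [hA.trace_eq_sum_eigenvalues] at h0
  simp only [hA.trace_pow_eq_sum_eigenvalues_pow, RCLike.ofReal_real_eq_id, id] at h0 ⊢
  exact abs_sum_cube_le_of_sum_eq_zero hn h0

end Matrix.IsHermitian

/-- Two-sided Okumura inequality: for a trace-free real symmetric `n × n` matrix `A` (`n ≥ 2`),
`|trace(A³)| ≤ ((n-2)/√(n(n-1))) · ‖A‖³` with `‖A‖ = √(trace(A²))` the Frobenius norm.
In particular, for `n = 2` every trace-free real symmetric `2 × 2` matrix has `trace(A³) = 0`. -/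
theorem okumura_abs_inequality :
    (∀ (n : ℕ), 2 ≤ n → ∀ A : Matrix (Fin n) (Fin n) ℝ, A.IsSymm → A.trace = 0 →
      |Matrix.trace (A * A * A)| ≤
        (((n : ℝ) - 2) / Real.sqrt ((n : ℝ) * ((n : ℝ) - 1))) *
          (Real.sqrt (Matrix.trace (A * A))) ^ 3) ∧
    (∀ A : Matrix (Fin 2) (Fin 2) ℝ, A.IsSymm → A.trace = 0 →
      Matrix.trace (A * A * A) = 0) := by
  have okumura (n : ℕ) (hn : 2 ≤ n) (A : Matrix (Fin n) (Fin n) ℝ) (hA : A.IsSymm)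
      (h0 : A.trace = 0) :
      |Matrix.trace (A * A * A)| ≤ (((n : ℝ) - 2) / √((n : ℝ) * ((n : ℝ) - 1))) *
        √(Matrix.trace (A * A)) ^ 3 := by
    rw [← pow_three', ← sq]
    simpa using
      (Matrix.isHermitian_iff_isSymm.2 hA).abs_trace_pow_three_le (by simpa using hn) h0
  refine ⟨okumura, fun A hA h0 ↦ ?_⟩
  simpa using okumura 2 le_rfl A hA h0
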